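/- Let p be a prime and R a commutative ring. Let X(t) = Σ_{n≥0} x_n t^n ∈ R[[t]] with x_0 = 1. Let U be the p-singular part of X, V the p-regular part of X, and Y(t) = V(t)·U(t)^{-1} = Σ_{n≥0} y_n t^n. Then for every n ≥ 1 one has the explicit formula y_n = Σ (−1)^k · x_{λ_0}·x_{λ_1}···x_{λ_k}, where the sum runs over all finite tuples (λ_0, λ_1, …, λ_k) (k ≥ 0) of positive integers with λ_0 + λ_1 + ⋯ + λ_k = n, p ∤ λ_0, and p ∣ λ_i for every 1 ≤ i ≤ k. -/

import Mathlib

open PowerSeries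

/-- The `p`-singular part of a power series `F = Σ fₙ tⁿ`, namely `Σ_{p ∣ n} fₙ tⁿ`. -/
noncomputable def pSingularPart {R : Type*} [CommRing R] (p : ℕ) (F : PowerSeries R) :
    PowerSeries R :=
  PowerSeries.mk fun n => if p ∣ n then PowerSeries.coeff (R := R) n F else 0

/-- The `p`-regular part of a power series `F = Σ fₙ tⁿ`, namely `Σ_{p ∤ n} fₙ tⁿ`. -/
noncomputable def pRegularPart {R : Type*} [CommRing R] (p : ℕ) (F : PowerSeries R) :
    PowerSeries R :=
  PowerSeries.mk fun n => if p ∣ n then 0 else PowerSeries.coeff (R := R) n F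

/-- `exp C = Σ_{k≥0} Cᵏ/k!` for a power series `C` with zero constant term over a
commutative `ℚ`-algebra.  (When the constant term of `C` is zero, `coeff n (C ^ k) = 0`
for `k > n`, so the truncated sum below computes the full exponential.) -/
noncomputable def psExp {R : Type*} [CommRing R] [Algebra ℚ R] (C : PowerSeries R) :
    PowerSeries R :=
  PowerSeries.mk fun n => ∑ k ∈ Finset.range (n + 1),
    ((k.factorial : ℚ)⁻¹) • PowerSeries.coeff (R := R) n (C ^ k)

/- Since `x₀ = 1`, `U` is invertible and `Y = V · U⁻¹`. Unfolding `U⁻¹ = 1 - (U - 1) U⁻¹`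
recursively writes the coefficient of `tᵐ` in `U⁻¹` as a sum over the compositions of `m` of
`∏ (-u_{λᵢ})`, and multiplying by `V` prepends a first block weighted by `v_{λ₀}`. As `u_i = x_i`
for `p ∣ i` and `0` otherwise, while `v_i = x_i` for `p ∤ i` and `0` otherwise, only the
compositions of the statement survive, each contributing `(-1)^k x_{λ₀} ⋯ x_{λ_k}`. -/

namespace Composition

lemma exists_blocks_eq_cons {n : ℕ} (hn : 0 < n) (c : Composition n) :
    ∃ a l, c.blocks = a :: l :=
  List.exists_cons_of_ne_nil (c.blocks_eq_nil.not.mpr hn.ne')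

@[simps]
def cons {n : ℕ} (j : ℕ) (hj : 0 < j) (c : Composition n) : Composition (j + n) where
  blocks := j :: c.blocks
  blocks_pos hi := (List.mem_cons.mp hi).elim (· ▸ hj) c.blocks_pos
  blocks_sum := by simp [c.blocks_sum]

@[simps]
def tail {n : ℕ} (c : Composition n) : Composition (n - c.blocks.headI) where
  blocks := c.blocks.tail
  blocks_pos hi := c.blocks_pos (List.mem_of_mem_tail hi)
  blocks_sum := by rw [List.tail_sum, c.blocks_sum]

instance : Unique (Composition 0) where
  default := ones 0
  uniq c := Composition.ext (by simp [blocks_eq_nil])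

theorem sum_eq_sum_Icc_sum_cons {M : Type*} [AddCommMonoid M] {n : ℕ} (hn : 0 < n)
    (f : List ℕ → M) :
    ∑ c : Composition n, f c.blocks
      = ∑ j ∈ Finset.Icc 1 n, ∑ c : Composition (n - j), f (j :: c.blocks) := by
  rw [Finset.sum_sigma']
  refine Finset.sum_bij' (fun c _ => ⟨c.blocks.headI, c.tail⟩)
    (fun x hx => have hx := Finset.mem_Icc.mp (Finset.mem_sigma.mp hx).1
      (cons x.1 hx.1 x.2).cast (by omega)) ?_ (fun _ _ => Finset.mem_univ _) ?_ (fun _ _ => rfl) ?_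
  · intro c _
    obtain ⟨a, l, hc⟩ := c.exists_blocks_eq_cons hn
    have ha : 1 ≤ a := c.one_le_blocks (by simp [hc])
    have han : a ≤ n := c.blocks_le (by simp [hc])
    simp [hc, ha, han]
  · intro c _
    obtain ⟨a, l, hc⟩ := c.exists_blocks_eq_cons hn
    ext1
    simp [hc]
  · intro c _
    obtain ⟨a, l, hc⟩ := c.exists_blocks_eq_cons hn
    simp [hc]

end Composition

namespace PowerSeries

variable {R : Type*} [CommRing R]

theorem coeff_mul_eq_sum_Icc {B : R⟦X⟧} (hB : constantCoeff B = 0) (G : R⟦X⟧) (n : ℕ) :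
    coeff n (B * G) = ∑ j ∈ Finset.Icc 1 n, coeff j B * coeff (n - j) G := by
  rw [coeff_mul, Finset.Nat.sum_antidiagonal_eq_sum_range_succ (fun i j => coeff i B * coeff j G),
    Finset.range_eq_Ico, Finset.sum_eq_sum_Ico_succ_bot n.succ_pos, ← Finset.Ico_add_one_right_eq_Icc]
  simp [hB]

theorem coeff_mul_eq_sum_compositions {B G : R⟦X⟧} (hB : constantCoeff B = 0) {w : ℕ → R}
    {n : ℕ} (hn : 0 < n) (hG : ∀ m < n, coeff m G = ∑ c : Composition m, (c.blocks.map w).prod) :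
    coeff n (B * G)
      = ∑ c : Composition n, coeff c.blocks.headI B * (c.blocks.tail.map w).prod := by
  rw [coeff_mul_eq_sum_Icc hB, Composition.sum_eq_sum_Icc_sum_cons hn
    (fun l => coeff l.headI B * (l.tail.map w).prod)]
  refine Finset.sum_congr rfl fun j hj => ?_
  have hj := Finset.mem_Icc.mp hj
  rw [hG (n - j) (by omega), Finset.mul_sum]
  rfl

theorem coeff_eq_sum_compositions_of_mul_eq_one {A B : R⟦X⟧} (hA : constantCoeff A = 1)
    (hAB : A * B = 1) (n : ℕ) :
    coeff n B = ∑ c : Composition n, (c.blocks.map fun i => -coeff i A).prod := by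
  induction n using Nat.strong_induction_on with
  | _ n ih =>
  rcases n.eq_zero_or_pos with rfl | hn
  · have hB : constantCoeff B = 1 := by simpa [hA] using congrArg constantCoeff hAB
    simp [hB, (default : Composition 0).blocks_eq_nil.mpr rfl]
  · have hB : B = 1 - (A - 1) * B := by rw [sub_mul, hAB, one_mul, sub_sub_cancel]
    rw [hB, map_sub, coeff_one, if_neg hn.ne', zero_sub,
      coeff_mul_eq_sum_compositions (by simp [hA]) hn (fun m hm => ih m hm), ← Finset.sum_neg_distrib]
    refine Finset.sum_congr rfl fun c _ => ?_
    obtain ⟨a, l, hc⟩ := c.exists_blocks_eq_cons hn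
    have ha : a ≠ 0 := (c.blocks_pos (by simp [hc])).ne'
    simp [hc, coeff_one, ha]

end PowerSeries

section pParts

variable {R : Type*} [CommRing R] (p : ℕ) (F : R⟦X⟧)

@[simp]
lemma coeff_pSingularPart (n : ℕ) :
    coeff n (pSingularPart p F) = if p ∣ n then coeff n F else 0 :=
  coeff_mk _ _

@[simp]
lemma coeff_pRegularPart (n : ℕ) :
    coeff n (pRegularPart p F) = if p ∣ n then 0 else coeff n F :=
  coeff_mk _ _

lemma constantCoeff_pSingularPart : constantCoeff (pSingularPart p F) = constantCoeff F := by
  rw [← coeff_zero_eq_constantCoeff_apply, coeff_pSingularPart, if_pos (dvd_zero p),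
    coeff_zero_eq_constantCoeff_apply]

lemma constantCoeff_pRegularPart : constantCoeff (pRegularPart p F) = 0 := by
  rw [← coeff_zero_eq_constantCoeff_apply, coeff_pRegularPart, if_pos (dvd_zero p)]

lemma prod_map_neg_coeff_pSingularPart (l : List ℕ) :
    (l.map fun i => -coeff i (pSingularPart p F)).prod
      = if ∀ i ∈ l, p ∣ i then (-1) ^ l.length * (l.map fun i => coeff i F).prod else 0 := by
  induction l with
  | nil => simp
  | cons a l ih =>
    rw [List.map_cons, List.prod_cons, ih]
    by_cases ha : p ∣ a
    · simp only [ha, coeff_pSingularPart, if_true, List.forall_mem_cons, true_and,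
        List.length_cons, List.map_cons, List.prod_cons]
      split_ifs <;> ring
    · simp [ha]

lemma coeff_pRegularPart_mul_prod_map_neg_coeff_pSingularPart (a : ℕ) (l : List ℕ) :
    coeff a (pRegularPart p F) * (l.map fun i => -coeff i (pSingularPart p F)).prod
      = if ¬p ∣ a ∧ ∀ i ∈ l, p ∣ i then
          (-1) ^ l.length * (coeff a F * (l.map fun i => coeff i F).prod) else 0 := by
  rw [prod_map_neg_coeff_pSingularPart]
  by_cases ha : p ∣ a
  · simp [ha]
  by_cases hl : ∀ i ∈ l, p ∣ i
  · rw [coeff_pRegularPart, if_neg ha, if_pos hl, if_pos ⟨ha, hl⟩]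
    ring
  · rw [if_neg hl, mul_zero, if_neg (not_and_of_not_right _ hl)]

end pParts

theorem stmt3_general (p : ℕ) (R : Type*) [CommRing R]
    (X Y : PowerSeries R)
    (hX0 : PowerSeries.constantCoeff (R := R) X = 1)
    (hY : Y * pSingularPart p X = pRegularPart p X) :
    ∀ n : ℕ, 1 ≤ n →
      PowerSeries.coeff (R := R) n Y =
        ∑ c ∈ Finset.univ.filter
            (fun c : Composition n => ¬ p ∣ c.blocks.headI ∧ ∀ i ∈ c.blocks.tail, p ∣ i),
          (-1 : R) ^ (c.length - 1) * (c.blocks.map fun i => PowerSeries.coeff (R := R) i X).prod := by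
  intro n hn
  have hU : constantCoeff (pSingularPart p X) = 1 := by rw [constantCoeff_pSingularPart, hX0]
  obtain ⟨B, hUB⟩ : ∃ B, pSingularPart p X * B = 1 := ⟨_, mul_invOfUnit _ 1 (by simp [hU])⟩
  have hYB : Y = pRegularPart p X * B := by rw [← hY, mul_assoc, hUB, mul_one]
  rw [hYB, coeff_mul_eq_sum_compositions (constantCoeff_pRegularPart p X) hn
    (fun m _ => coeff_eq_sum_compositions_of_mul_eq_one hU hUB m), Finset.sum_filter]
  refine Finset.sum_congr rfl fun c _ => ?_
  obtain ⟨a, l, hc⟩ := c.exists_blocks_eq_cons hn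
  rw [← c.blocks_length, hc]
  simp only [List.headI_cons, List.tail_cons, List.length_cons, Nat.add_sub_cancel, List.map_cons,
    List.prod_cons]
  exact coeff_pRegularPart_mul_prod_map_neg_coeff_pSingularPart p X a l

/-- over any commutative ring, if `X = Σ xₙ tⁿ` has `x₀ = 1`,
`U`/`V` are its `p`-singular/`p`-regular parts and `Y = V·U⁻¹ = Σ yₙ tⁿ`, then for `n ≥ 1`,
`yₙ = Σ (-1)^k x_{λ₀} x_{λ₁} ⋯ x_{λ_k}`, the sum running over all tuples
`(λ₀,…,λ_k)` of positive integers with `λ₀+⋯+λ_k = n`, `p ∤ λ₀` and `p ∣ λᵢ` for `i ≥ 1`.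
(Such tuples are precisely the compositions of `n` whose first block is prime to `p` and
whose remaining blocks are divisible by `p`; here `k = length - 1`.) -/
theorem stmt3 (p : ℕ) (hp : p.Prime) (R : Type*) [CommRing R]
    (X Y : PowerSeries R)
    (hX0 : PowerSeries.constantCoeff (R := R) X = 1)
    (hY : Y * pSingularPart p X = pRegularPart p X) :
    ∀ n : ℕ, 1 ≤ n →
      PowerSeries.coeff (R := R) n Y =
        ∑ c ∈ Finset.univ.filter
            (fun c : Composition n => ¬ p ∣ c.blocks.headI ∧ ∀ i ∈ c.blocks.tail, p ∣ i),
          (-1 : R) ^ (c.length - 1) * (c.blocks.map fun i => PowerSeries.coeff (R := R) i X).prod :=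
  stmt3_general p R X Y hX0 hY
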